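/- arXiv:math/0703842 — 4 statements merged into one kernel-verified Lean document; each statement's English description precedes it below -/
import Mathlib

section
/- Let p be a prime and let r, r' be integers such that C(r+n-1, n) ≡ C(r'+n-1, n) (mod p) for every natural number n, where C denotes the generalized binomial coefficient (extended to negative upper arguments). Then r = r'. -/
/-- Generalized binomial coefficient `C(n, k)` for `n : ℤ`, `k : ℕ`:
the usual binomial coefficient for `n ≥ 0`, and
`C(n, k) = (-1)^k C(k - n - 1, k)` for `n < 0`. -/
def gchoose (n : ℤ) (k : ℕ) : ℤ :=
  if 0 ≤ n then ((n.toNat.choose k : ℕ) : ℤ)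
  else (-1) ^ k * (((k - n - 1).toNat.choose k : ℕ) : ℤ)

lemma gchoose_zero (m : ℤ) : gchoose m 0 = 1 := by
  unfold gchoose; split <;> simp

lemma gchoose_pascal (m : ℤ) (n : ℕ) :
    gchoose m (n + 1) = gchoose (m - 1) (n + 1) + gchoose (m - 1) n := by
  unfold gchoose
  rcases lt_trichotomy m 0 with hm | hm | hm
  · have h1 : ¬ 0 ≤ m := by omega
    have h2 : ¬ 0 ≤ m - 1 := by omega
    simp only [h1, h2, if_neg, if_false, Nat.cast_add, Nat.cast_one]
    have e1 : ((n:ℤ) + 1 - m - 1).toNat = ((n:ℤ) - m).toNat := by omega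
    have e2 : ((n:ℤ) + 1 - (m-1) - 1).toNat = ((n:ℤ) - m).toNat + 1 := by omega
    have e3 : ((n:ℤ) - (m-1) - 1).toNat = ((n:ℤ) - m).toNat := by omega
    rw [e1, e2, e3, Nat.choose_succ_succ]
    push_cast; ring
  · subst hm
    have h1 : (0:ℤ) ≤ 0 := le_refl _
    have h2 : ¬ (0:ℤ) ≤ 0 - 1 := by norm_num
    simp only [h1, h2, if_pos, if_neg, if_false, Nat.cast_add, Nat.cast_one]
    have e2 : ((n:ℤ) + 1 - (0-1) - 1).toNat = n + 1 := by omega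
    have e3 : ((n:ℤ) - (0-1) - 1).toNat = n := by omega
    rw [e2, e3]
    simp [Nat.choose_self, pow_succ]
  · have h1 : (0:ℤ) ≤ m := by omega
    have h2 : (0:ℤ) ≤ m - 1 := by omega
    simp only [h1, h2, if_pos]
    have e : m.toNat = (m-1).toNat + 1 := by omega
    rw [e, Nat.choose_succ_succ]
    push_cast; ring

section PS
open PowerSeries

variable (p : ℕ)

noncomputable def Sser (r : ℤ) : (ZMod p)⟦X⟧ :=
  PowerSeries.mk fun n => ((gchoose (r + n - 1) n : ℤ) : ZMod p)

lemma Sser_mul (r : ℤ) : Sser p r * (1 - X) = Sser p (r - 1) := by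
  ext n
  rw [mul_sub, mul_one, map_sub]
  cases n with
  | zero =>
    simp only [Sser, coeff_mk, PowerSeries.coeff_zero_eq_constantCoeff, map_mul]
    simp [gchoose_zero]
  | succ n =>
    rw [PowerSeries.coeff_succ_mul_X]
    simp only [Sser, coeff_mk]
    congr 1
    have h := gchoose_pascal (r + n) n
    push_cast
    have e1 : r + ((n:ℤ) + 1) - 1 = r + n := by ring
    have e2 : r - 1 + ((n:ℤ) + 1) - 1 = r + n - 1 := by ring
    rw [e1, e2]
    rw [h]; push_cast; ring

lemma Sser_zero : Sser p 0 = 1 := by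
  ext n
  cases n with
  | zero => simp [Sser, gchoose_zero]
  | succ n =>
    simp only [Sser, coeff_mk, PowerSeries.coeff_one, Nat.succ_ne_zero, if_false]
    have h1 : (0:ℤ) ≤ 0 + (n+1:ℕ) - 1 := by push_cast; omega
    have e : ((0:ℤ) + (n+1:ℕ) - 1).toNat = n := by push_cast; omega
    rw [gchoose]
    rw [if_pos h1, e]
    simp [Nat.choose_eq_zero_of_lt]

lemma Sser_mul_pow (r : ℤ) (m : ℕ) : Sser p r * (1 - X)^m = Sser p (r - m) := by
  induction m with
  | zero => simp
  | succ m ih =>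
    rw [pow_succ, ← mul_assoc, ih, Sser_mul]
    congr 1; push_cast; ring

lemma Sser_neg (s : ℕ) : Sser p (-(s:ℤ)) = (1 - X)^s := by
  have := Sser_mul_pow p 0 s
  rw [Sser_zero, one_mul] at this
  rw [this]; norm_num

end PS

section Main
open PowerSeries

variable (p : ℕ) [Fact p.Prime]

lemma oneSubX_coeffs (c : ℕ) :
    PowerSeries.constantCoeff (R := ZMod p) ((1 - X)^c) = 1 ∧
    (PowerSeries.coeff (R := ZMod p) 1) ((1 - X)^c) = -(c : ZMod p) := by
  induction c with
  | zero => simp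
  | succ c ih =>
    constructor
    · rw [pow_succ, map_mul, ih.1]; simp
    · rw [pow_succ, mul_sub, mul_one, map_sub, PowerSeries.coeff_succ_mul_X,
        PowerSeries.coeff_zero_eq_constantCoeff, ih.1, ih.2]
      push_cast; ring

instance : CharP ((ZMod p)⟦X⟧) p :=
  charP_of_injective_ringHom (PowerSeries.C_injective) p

lemma oneSubX_pow_eq_one (c : ℕ) (h : (1 - X : (ZMod p)⟦X⟧)^c = 1) : c = 0 := by
  induction c using Nat.strong_induction_on with
  | _ c ih =>
    by_cases hdvd : p ∣ c
    · rcases Nat.eq_zero_or_pos c with h0 | h0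
      · exact h0
      obtain ⟨d, rfl⟩ := hdvd
      have hp2 := (Fact.out : p.Prime).two_le
      have hd1 : 0 < d := by
        rcases Nat.eq_zero_or_pos d with h' | h'
        · subst h'; simp at h0
        · exact h'
      have hd : d < p * d := by
        calc d = 1 * d := (one_mul d).symm
        _ < p * d := Nat.mul_lt_mul_of_lt_of_le (by omega) le_rfl hd1
      have h2 : ((1 - X : (ZMod p)⟦X⟧)^d)^p = 1 := by
        rw [← pow_mul, mul_comm]; exact h
      have hchar : ExpChar ((ZMod p)⟦X⟧) p := ExpChar.prime (Fact.out : p.Prime)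
      have h3 : ((1 - X : (ZMod p)⟦X⟧)^d - 1)^p = 0 := by
        rw [sub_pow_char, h2, one_pow, sub_self]
      have h4 : (1 - X : (ZMod p)⟦X⟧)^d = 1 :=
        sub_eq_zero.mp ((pow_eq_zero_iff (by omega)).mp h3)
      have := ih d hd h4
      simp [this]
    · exfalso
      have := congrArg (PowerSeries.coeff (R := ZMod p) 1) h
      rw [(oneSubX_coeffs p c).2, PowerSeries.coeff_one] at this
      simp at this
      exact hdvd ((ZMod.natCast_eq_zero_iff c p).mp this)

lemma oneSubX_pow_inj {a b : ℕ}
    (h1 : (1 - X : (ZMod p)⟦X⟧)^a = (1 - X)^b) : a = b := by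
  have hu : IsUnit (1 - X : (ZMod p)⟦X⟧) := by
    rw [PowerSeries.isUnit_iff_constantCoeff]; simp
  rcases le_total a b with hle | hle
  · obtain ⟨c, rfl⟩ := Nat.exists_eq_add_of_le hle
    have h2 : (1 - X : (ZMod p)⟦X⟧)^a * 1 = (1 - X)^a * (1 - X)^c := by
      rw [mul_one, ← pow_add]; exact h1
    have := oneSubX_pow_eq_one p c ((hu.pow a).mul_left_cancel h2).symm
    omega
  · obtain ⟨c, rfl⟩ := Nat.exists_eq_add_of_le hle
    have h2 : (1 - X : (ZMod p)⟦X⟧)^b * 1 = (1 - X)^b * (1 - X)^c := by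
      rw [mul_one, ← pow_add]; exact h1.symm
    have := oneSubX_pow_eq_one p c ((hu.pow b).mul_left_cancel h2).symm
    omega

end Main

theorem stmt3 (p : ℕ) (hp : p.Prime) (r r' : ℤ)
    (h : ∀ n : ℕ, ((gchoose (r + n - 1) n : ℤ) : ZMod p)
        = ((gchoose (r' + n - 1) n : ℤ) : ZMod p)) :
    r = r' := by
  haveI : Fact p.Prime := ⟨hp⟩
  have hS : Sser p r = Sser p r' := by
    ext n; simp only [Sser, PowerSeries.coeff_mk]; exact h n
  have hr : r ≤ ((r.toNat + r'.toNat : ℕ) : ℤ) := by omega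
  have hr' : r' ≤ ((r.toNat + r'.toNat : ℕ) : ℤ) := by omega
  set m : ℕ := r.toNat + r'.toNat with hm
  have h1 : Sser p (r - m) = Sser p (r' - m) := by
    rw [← Sser_mul_pow, ← Sser_mul_pow, hS]
  have e1 : r - (m : ℤ) = -((((m : ℤ) - r).toNat : ℕ) : ℤ) := by omega
  have e2 : r' - (m : ℤ) = -((((m : ℤ) - r').toNat : ℕ) : ℤ) := by omega
  rw [e1, e2, Sser_neg, Sser_neg] at h1
  have hab := oneSubX_pow_inj p h1
  omega
end

section
/- Let p be a prime, r ≥ 0 an integer, m ≥ 1, k ≥ 0 integers. Then ∏_{i=1}^{m} C(r + i·p^k - 1, p^k) = C(r + m·p^k - 1, m·p^k) · ∏_{i=1}^{m} C(i·p^k, p^k) (as an identity of natural numbers). -/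
theorem stmt10 (p r m k : ℕ) (hp : p.Prime) (hm : 1 ≤ m) :
    ∏ i ∈ Finset.Icc 1 m, (r + i * p ^ k - 1).choose (p ^ k)
      = (r + m * p ^ k - 1).choose (m * p ^ k) *
          ∏ i ∈ Finset.Icc 1 m, (i * p ^ k).choose (p ^ k) := by
  have hq : 1 ≤ p ^ k := Nat.one_le_pow _ _ hp.pos
  set q := p ^ k with hqdef
  rcases Nat.eq_zero_or_pos r with hr | hr
  · subst hr
    have hL : ∏ i ∈ Finset.Icc 1 m, (0 + i * q - 1).choose q = 0 := by
      apply Finset.prod_eq_zero (Finset.mem_Icc.2 ⟨le_refl 1, hm⟩)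
      simp only [Nat.zero_add, one_mul]
      exact Nat.choose_eq_zero_of_lt (by omega)
    have hR : (0 + m * q - 1).choose (m * q) = 0 := by
      apply Nat.choose_eq_zero_of_lt
      have : 1 ≤ m * q := Nat.one_le_iff_ne_zero.2 (by positivity)
      omega
    rw [hL, hR, zero_mul]
  · induction m with
    | zero => omega
    | succ n ih =>
      rcases Nat.eq_zero_or_pos n with hn | hn
      · subst hn
        simp [Nat.choose_self]
      · rw [Finset.prod_Icc_succ_top (by omega : 1 ≤ n + 1),
            Finset.prod_Icc_succ_top (by omega : 1 ≤ n + 1),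
            ih hn]
        have key : (r + (n + 1) * q - 1).choose ((n + 1) * q) * ((n + 1) * q).choose q
            = (r + (n + 1) * q - 1).choose q * (r + (n + 1) * q - 1 - q).choose ((n + 1) * q - q) := by
          apply Nat.choose_mul
          · calc q = 1 * q := (one_mul q).symm
              _ ≤ (n + 1) * q := Nat.mul_le_mul_right q (by omega)
        have e1 : r + (n + 1) * q - 1 - q = r + n * q - 1 := by
          have : (n + 1) * q = n * q + q := by ring
          omega
        have e2 : (n + 1) * q - q = n * q := by
          have : (n + 1) * q = n * q + q := by ring
          omega
        rw [e1, e2] at key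
        zify at key ⊢
        linear_combination (-(∏ x ∈ Finset.Icc 1 n, ((x * q).choose q : ℤ))) * key
end

section
/- Let R be a commutative ring of characteristic p > 0 equipped with an iterative higher derivation (D_n)_{n∈ℕ} (i.e., D_0 = id, each D_n is additive, Leibniz's rule D_i(fg) = ∑_{r=0}^{i} (D_r f)(D_{i-r} g) holds, and D_i ∘ D_j = C(i+j, i) D_{i+j}). Then for every f ∈ R and all natural numbers n, k: D_{n·p^k}(f^{p^k}) = (D_n f)^{p^k}. -/
/-- An iterative higher derivation on a commutative ring `R`:
a family of additive maps `D n : R → R` with `D 0 = id`, satisfying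
Leibniz's rule `D n (f*g) = ∑_{r=0}^{n} (D r f)(D (n-r) g)` and the
iterativity condition `D i ∘ D j = C(i+j, i) • D (i+j)`. -/
structure IterHD (R : Type*) [CommRing R] where
  D : ℕ → R → R
  D_zero : ∀ f, D 0 f = f
  D_add : ∀ n f g, D n (f + g) = D n f + D n g
  leibniz : ∀ n f g, D n (f * g) =
    ∑ r ∈ Finset.range (n + 1), D r f * D (n - r) g
  iter : ∀ i j f, D i (D j f) = ((i + j).choose i : R) * D (i + j) f

namespace IterHDaux

variable {R : Type*} [CommRing R] (H : IterHD R)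

lemma D_zero_arg (n : ℕ) : H.D n 0 = 0 := by
  have h := H.D_add n 0 0
  rw [add_zero] at h
  have h2 : H.D n 0 + H.D n 0 = H.D n 0 + 0 := by rw [add_zero]; exact h.symm
  exact add_left_cancel h2

lemma D_one_pos : ∀ n : ℕ, 0 < n → H.D n 1 = 0 := by
  intro n
  induction n using Nat.strong_induction_on with
  | _ n IH =>
    intro hn
    obtain ⟨m, rfl⟩ := Nat.exists_eq_add_of_lt hn
    rw [zero_add] at *
    have h := H.leibniz (m + 1) 1 1
    rw [mul_one, Finset.sum_range_succ, Finset.sum_range_succ'] at h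
    have hmid : ∀ r ∈ Finset.range m,
        H.D (r + 1) 1 * H.D (m + 1 - (r + 1)) 1 = 0 := by
      intro r hr
      rw [Finset.mem_range] at hr
      rw [IH (r + 1) (by omega) (by omega), zero_mul]
    rw [Finset.sum_eq_zero hmid] at h
    simp only [Nat.sub_zero, Nat.sub_self, H.D_zero, zero_add, one_mul, mul_one] at h
    have h2 : H.D (m + 1) 1 + H.D (m + 1) 1 = H.D (m + 1) 1 + 0 := by
      rw [add_zero]; exact h.symm
    exact add_left_cancel h2

/-- The generating-series ring hom `f ↦ ∑ D n f · Xⁿ`. -/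
noncomputable def toHom : R →+* PowerSeries R where
  toFun f := PowerSeries.mk fun n => H.D n f
  map_one' := by
    ext n
    rw [PowerSeries.coeff_mk, PowerSeries.coeff_one]
    rcases Nat.eq_zero_or_pos n with rfl | hn
    · simp [H.D_zero]
    · simp [D_one_pos H n hn, Nat.pos_iff_ne_zero.mp hn]
  map_mul' f g := by
    ext n
    rw [PowerSeries.coeff_mk, PowerSeries.coeff_mul,
      Finset.Nat.sum_antidiagonal_eq_sum_range_succ_mk, H.leibniz]
    simp [PowerSeries.coeff_mk]
  map_zero' := by
    ext n
    simp [D_zero_arg H n]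
  map_add' f g := by
    ext n
    simp [H.D_add]

lemma toHom_coeff (f : R) (n : ℕ) :
    PowerSeries.coeff n (toHom H f) = H.D n f := by
  simp [toHom]

lemma charP_powerSeries (p : ℕ) [CharP R p] : CharP (PowerSeries R) p := by
  have hC : Function.Injective (PowerSeries.C (R := R)) := fun a b h => by
    simpa using congrArg (PowerSeries.constantCoeff (R := R)) h
  exact charP_of_injective_ringHom hC p

/-- Coefficient of a `p`-th power of a power series over a ring of char `p`. -/
lemma coeff_pow_char (p : ℕ) (hp : p.Prime) [CharP R p] (F : PowerSeries R) (n : ℕ) :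
    PowerSeries.coeff (n * p) (F ^ p) = (PowerSeries.coeff n F) ^ p := by
  haveI := Fact.mk hp
  haveI := charP_powerSeries (R := R) p
  set Q : Polynomial R := F.trunc (n * p + 1) with hQ
  have hdvd : (PowerSeries.X : PowerSeries R) ^ (n * p + 1) ∣ F - (Q : PowerSeries R) := by
    rw [PowerSeries.X_pow_dvd_iff]
    intro m hm
    rw [map_sub, Polynomial.coeff_coe, hQ, PowerSeries.coeff_trunc, if_pos hm, sub_self]
  obtain ⟨G, hG⟩ := hdvd
  have hF : F = (Q : PowerSeries R) + PowerSeries.X ^ (n * p + 1) * G := by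
    rw [← hG]; ring
  have hpow : F ^ p = (Q : PowerSeries R) ^ p + (PowerSeries.X ^ (n * p + 1) * G) ^ p := by
    rw [hF]; exact add_pow_char _ _ _
  have hsecond :
      PowerSeries.coeff (n * p) ((PowerSeries.X ^ (n * p + 1) * G) ^ p) = 0 := by
    have hdvd2 : (PowerSeries.X : PowerSeries R) ^ ((n * p + 1) * p) ∣
        (PowerSeries.X ^ (n * p + 1) * G) ^ p := by
      rw [mul_pow, ← pow_mul]
      exact Dvd.intro _ rfl
    exact (PowerSeries.X_pow_dvd_iff.mp hdvd2) (n * p)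
      (lt_of_lt_of_le (Nat.lt_succ_self _) (Nat.le_mul_of_pos_right _ hp.pos))
  have hfirst : PowerSeries.coeff (n * p) ((Q : PowerSeries R) ^ p)
      = (Q.coeff n) ^ p := by
    rw [← Polynomial.coe_pow, Polynomial.coeff_coe]
    have hexp := Polynomial.map_frobenius_expand (p := p) Q
    calc (Q ^ p).coeff (n * p)
        = (Polynomial.map (frobenius R p) (Polynomial.expand R p Q)).coeff (n * p) := by
          rw [hexp]
      _ = frobenius R p ((Polynomial.expand R p Q).coeff (n * p)) := by
          rw [Polynomial.coeff_map]
      _ = (Q.coeff n) ^ p := by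
          rw [Polynomial.coeff_expand_mul hp.pos, frobenius_def]
  have hQn : Q.coeff n = PowerSeries.coeff n F := by
    rw [hQ, PowerSeries.coeff_trunc, if_pos (Nat.lt_succ_of_le (Nat.le_mul_of_pos_right _ hp.pos))]
  rw [hpow, map_add, hsecond, add_zero, hfirst, hQn]

lemma key (p : ℕ) (hp : p.Prime) [CharP R p] (f : R) (n : ℕ) :
    H.D (n * p) (f ^ p) = (H.D n f) ^ p := by
  rw [← toHom_coeff H, map_pow, coeff_pow_char p hp, toHom_coeff]

end IterHDaux

theorem stmt11 (R : Type*) [CommRing R] (p : ℕ) (hp : p.Prime) [CharP R p]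
    (H : IterHD R) (f : R) (n k : ℕ) :
    H.D (n * p ^ k) (f ^ p ^ k) = (H.D n f) ^ p ^ k := by
  induction k generalizing f n with
  | zero => simp
  | succ k IH =>
    have h1 : n * p ^ (k + 1) = n * p * p ^ k := by ring
    have h2 : f ^ p ^ (k + 1) = (f ^ p) ^ p ^ k := by
      rw [← pow_mul, pow_succ, mul_comm (p ^ k) p, pow_mul]
    rw [h1, h2, IH, IterHDaux.key H p hp, ← pow_mul, pow_succ, mul_comm (p ^ k) p, pow_mul]
end

section
/- Let (D_n)_{n∈ℕ} be an iterative higher derivation on a field F of characteristic p > 0, and let k ≥ 0. Set F_{k-1} = ⋂_{i=0}^{k-1} ker(D_{p^i}) (with F_{-1} = F). Then for all f ∈ F_{k-1} and all g ∈ F, D_{p^k}(fg) = (D_{p^k} f) g + f (D_{p^k} g); in particular, the restriction of D_{p^k} to F_{k-1} is a derivation. -/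
lemma lucas_pow (p : ℕ) (hp : p.Prime) (i n : ℕ) :
    ((n.choose (p ^ i) : ZMod p)) = ((n / p ^ i : ℕ) : ZMod p) := by
  haveI : Fact p.Prime := ⟨hp⟩
  have h := Choose.choose_modEq_choose_mul_prod_range_choose (n := n) (k := p ^ i) (p := p) i
  have h2 : ((n.choose (p ^ i) : ℤ) : ZMod p)
      = ((n / p ^ i).choose (p ^ i / p ^ i) *
        ∏ j ∈ Finset.range i, (n / p ^ j % p).choose (p ^ i / p ^ j % p) : ℤ) := by
    exact_mod_cast (ZMod.intCast_eq_intCast_iff _ _ _).mpr h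
  have hdiv : p ^ i / p ^ i = 1 := Nat.div_self (pow_pos hp.pos i)
  have hprod : ∀ j ∈ Finset.range i, (n / p ^ j % p).choose (p ^ i / p ^ j % p) = 1 := by
    intro j hj
    rw [Finset.mem_range] at hj
    have : p ^ i / p ^ j = p ^ (i - j) := Nat.pow_div hj.le hp.pos
    rw [this, Nat.pow_mod, Nat.mod_self, zero_pow (by omega), Nat.zero_mod, Nat.choose_zero_right]
  rw [Finset.prod_congr rfl hprod, Finset.prod_const_one, hdiv,
    Nat.choose_one_right] at h2
  simp only [Nat.cast_one, mul_one, Nat.cast_ofNat] at h2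
  exact_mod_cast h2

lemma D_zero_map {R : Type*} [CommRing R] (H : IterHD R) (n : ℕ) : H.D n 0 = 0 := by
  have := H.D_add n 0 0
  rw [add_zero] at this
  linear_combination -this

lemma D_vanish (F : Type*) [Field F] (p : ℕ) (hp : p.Prime) [CharP F p]
    (H : IterHD F) (k : ℕ) (f : F) (hf : ∀ i < k, H.D (p ^ i) f = 0) :
    ∀ r, 0 < r → r < p ^ k → H.D r f = 0 := by
  intro r
  induction r using Nat.strong_induction_on with
  | _ r ih =>
    intro hr hrk
    set i := r.factorization p with hi
    have hdvd : p ^ i ∣ r := Nat.ordProj_dvd r p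
    have hndvd : ¬ p ∣ r / p ^ i := Nat.not_dvd_ordCompl hp hr.ne'
    have hle : p ^ i ≤ r := Nat.le_of_dvd hr hdvd
    rcases eq_or_lt_of_le hle with heq | hlt
    · -- r = p ^ i
      have hik : i < k := by
        by_contra hik
        push_neg at hik
        have : p ^ k ≤ p ^ i := Nat.pow_le_pow_right hp.pos hik
        omega
      rw [← heq]
      exact hf i hik
    · -- r = p ^ i + m with 0 < m < r
      have hp1 : 0 < p ^ i := pow_pos hp.pos i
      set m := r - p ^ i with hm
      have hm0 : 0 < m := by omega
      have hDm : H.D m f = 0 := ih m (by omega) hm0 (by omega)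
      have hiter := H.iter (p ^ i) m f
      rw [hDm, D_zero_map] at hiter
      have hrm : p ^ i + m = r := by omega
      rw [hrm] at hiter
      -- choose r (p^i) ≠ 0 in F
      have hchoose : (r.choose (p ^ i) : F) ≠ 0 := by
        rw [Ne, CharP.cast_eq_zero_iff F p]
        intro hdv
        haveI : NeZero p := ⟨hp.ne_zero⟩
        have h0 : ((r.choose (p ^ i) : ℕ) : ZMod p) = 0 :=
          (ZMod.natCast_eq_zero_iff _ _).mpr hdv
        rw [lucas_pow p hp] at h0
        exact hndvd ((ZMod.natCast_eq_zero_iff _ _).mp h0)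
      have := hiter.symm
      rcases mul_eq_zero.mp this with h | h
      · exact absurd h hchoose
      · exact h

theorem stmt13 (F : Type*) [Field F] (p : ℕ) (hp : p.Prime) [CharP F p]
    (H : IterHD F) (k : ℕ) (f : F) (hf : ∀ i < k, H.D (p ^ i) f = 0) (g : F) :
    H.D (p ^ k) (f * g) = H.D (p ^ k) f * g + f * H.D (p ^ k) g := by
  have hpos : 0 < p ^ k := pow_pos hp.pos k
  rw [H.leibniz, Finset.sum_range_succ, Nat.sub_self, H.D_zero]
  have hmid : ∑ r ∈ Finset.range (p ^ k), H.D r f * H.D (p ^ k - r) g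
      = f * H.D (p ^ k) g := by
    rw [Finset.sum_eq_single_of_mem 0 (Finset.mem_range.mpr hpos)]
    · rw [H.D_zero, Nat.sub_zero]
    · intro r hr hne
      rw [D_vanish F p hp H k f hf r (Nat.pos_of_ne_zero hne) (Finset.mem_range.mp hr),
        zero_mul]
  rw [hmid]
  ring
end
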